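/- arXiv:cs/0404037 — 5 statements merged into one kernel-verified Lean document; each statement's English description precedes it below -/
import Mathlib

section
/- Let X be a deterministic Mealy machine with at most m states and let G be a finite directed graph (with n nodes) whose edges are either unannotated or annotated by input/output pairs of X. If there exists a path in G from node s0 to node sf whose sequence of annotations is accepted as a run by X, then there exists such a path whose number of annotated (communication) edges is at most m·n. -/
/-- A path in a graph whose edges carry an optional label, recorded as the
list of (optional) labels along the path. -/
inductive PathTo {N L : Type} (E : N → Option L → N → Prop) : N → N → List (Option L) → Prop
  | nil (s : N) : PathTo E s s []
  | cons {s t u : N} {l : Option L} {ls : List (Option L)} :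
      E s l t → PathTo E t u ls → PathTo E s u (l :: ls)

/-- The (input,output) list is accepted as a run of the deterministic Mealy
machine from state `q`. -/
def Accepts {Q I O : Type} (δ : Q → I → Q) (lam : Q → I → O) : Q → List (I × O) → Prop
  | _, [] => True
  | q, (a, b) :: t => lam q a = b ∧ Accepts δ lam (δ q a) t

section Aux

variable {N Q I O : Type} (E : N → Option (I × O) → N → Prop)
    (δ : Q → I → Q) (lam : Q → I → O)

/-- Path-with-run, recording the (node,state) pairs at each labeled edge. -/
inductive RP : N → Q → N → List (Option (I × O)) → List (N × Q) → Prop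
  | nil (s : N) (q : Q) : RP s q s [] []
  | consNone {s t u : N} {q : Q} {ls ps} : E s none t → RP t q u ls ps →
      RP s q u (none :: ls) ps
  | consSome {s t u : N} {q : Q} {a : I} {b : O} {ls ps} :
      E s (some (a, b)) t → lam q a = b → RP t (δ q a) u ls ps →
      RP s q u (some (a, b) :: ls) ((s, q) :: ps)

variable {E δ lam}

lemma rp_len {s q u ls ps} (h : RP E δ lam s q u ls ps) :
    ps.length = (ls.filterMap id).length := by
  induction h with
  | nil => simp
  | consNone _ _ ih => simpa using ih
  | consSome _ _ _ ih => simpa using ih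

lemma rp_of {s u ls} (h : PathTo E s u ls) :
    ∀ q, Accepts δ lam q (ls.filterMap id) → ∃ ps, RP E δ lam s q u ls ps := by
  induction h with
  | nil s => exact fun q _ => ⟨[], RP.nil s q⟩
  | @cons s t u l ls he _ ih =>
    intro q hacc
    match l with
    | none =>
      simp only [List.filterMap_cons, id] at hacc
      obtain ⟨ps, hps⟩ := ih q hacc
      exact ⟨ps, RP.consNone he hps⟩
    | some (a, b) =>
      simp only [List.filterMap_cons, id] at hacc
      obtain ⟨hb, hacc'⟩ := hacc
      obtain ⟨ps, hps⟩ := ih (δ q a) hacc'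
      exact ⟨(s, q) :: ps, RP.consSome he hb hps⟩

lemma rp_to {s q u ls ps} (h : RP E δ lam s q u ls ps) :
    PathTo E s u ls ∧ Accepts δ lam q (ls.filterMap id) := by
  induction h with
  | nil s q => exact ⟨PathTo.nil s, trivial⟩
  | consNone he _ ih => exact ⟨PathTo.cons he ih.1, by simpa using ih.2⟩
  | consSome he hb _ ih =>
    refine ⟨PathTo.cons he ih.1, ?_⟩
    simp only [List.filterMap_cons, id]
    exact ⟨hb, ih.2⟩

lemma rp_mem {s q u ls ps} (h : RP E δ lam s q u ls ps) :
    ∀ p r, (p, r) ∈ ps → ∃ ls₂ ps₂, RP E δ lam p r u ls₂ ps₂ ∧ ps₂.length ≤ ps.length := by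
  induction h with
  | nil => simp
  | consNone he hrp ih => exact ih
  | @consSome s t u q a b ls ps he hb hrp ih =>
    intro p r hmem
    rcases List.mem_cons.mp hmem with heq | hmem'
    · obtain ⟨rfl, rfl⟩ := Prod.mk.injEq .. ▸ (Prod.ext_iff.mp heq)
      exact ⟨_, _, RP.consSome he hb hrp, le_refl _⟩
    · obtain ⟨ls₂, ps₂, h₂, hlen⟩ := ih p r hmem'
      exact ⟨ls₂, ps₂, h₂, hlen.trans (Nat.le_succ _)⟩

lemma rp_shrink {s q u ls ps} (h : RP E δ lam s q u ls ps) (hnd : ¬ ps.Nodup) :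
    ∃ ls' ps', RP E δ lam s q u ls' ps' ∧ ps'.length < ps.length := by
  induction h with
  | nil => simp at hnd
  | consNone he _ ih =>
    obtain ⟨ls', ps', h', hlen⟩ := ih hnd
    exact ⟨none :: ls', ps', RP.consNone he h', hlen⟩
  | @consSome s t u q a b ls ps he hb hrp ih =>
    by_cases hmem : (s, q) ∈ ps
    · obtain ⟨ls₂, ps₂, h₂, hlen⟩ := rp_mem hrp s q hmem
      exact ⟨ls₂, ps₂, h₂, lt_of_le_of_lt hlen (by
        calc ps.length < ps.length + 1 := Nat.lt_succ_self _
        _ = ((s, q) :: ps).length := by simp)⟩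
    · have hnd' : ¬ ps.Nodup := fun hn => hnd (List.nodup_cons.mpr ⟨hmem, hn⟩)
      obtain ⟨ls', ps', h', hlen⟩ := ih hnd'
      exact ⟨some (a, b) :: ls', (s, q) :: ps', RP.consSome he hb h', by
        simpa using Nat.succ_lt_succ hlen⟩

lemma rp_short [Fintype N] [Fintype Q] :
    ∀ k {s : N} {q : Q} {u ls ps}, ps.length = k → RP E δ lam s q u ls ps →
      ∃ ls' ps', RP E δ lam s q u ls' ps' ∧ ps'.length ≤ Fintype.card (N × Q) := by
  intro k
  induction k using Nat.strong_induction_on with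
  | _ k ih =>
    intro s q u ls ps hk h
    by_cases hle : ps.length ≤ Fintype.card (N × Q)
    · exact ⟨ls, ps, h, hle⟩
    · have hnd : ¬ ps.Nodup := fun hn => hle (hn.length_le_card)
      obtain ⟨ls', ps', h', hlen⟩ := rp_shrink h hnd
      exact ih ps'.length (hk ▸ hlen) rfl h'

end Aux

theorem stmt0 {N Q I O : Type} [Fintype N] [Fintype Q]
    (m n : ℕ) (hN : Fintype.card N = n) (hQ : Fintype.card Q ≤ m)
    (E : N → Option (I × O) → N → Prop)
    (δ : Q → I → Q) (lam : Q → I → O) (qinit : Q)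
    (s0 sf : N) (ls : List (Option (I × O)))
    (hpath : PathTo E s0 sf ls)
    (hrun : Accepts δ lam qinit (ls.filterMap id)) :
    ∃ ls' : List (Option (I × O)), PathTo E s0 sf ls' ∧
      Accepts δ lam qinit (ls'.filterMap id) ∧
      (ls'.filterMap id).length ≤ m * n := by
  obtain ⟨ps, hps⟩ := rp_of hpath qinit hrun
  obtain ⟨ls', ps', h', hlen⟩ := rp_short ps.length rfl hps
  obtain ⟨hpath', hrun'⟩ := rp_to h'
  refine ⟨ls', hpath', hrun', ?_⟩
  rw [← rp_len h']
  refine hlen.trans ?_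
  rw [Fintype.card_prod, hN]
  rw [mul_comm]
  exact Nat.mul_le_mul_right n hQ
end

section
/- In a finite Kripke structure with total transition relation, EG g holds at state s if and only if there is a finite path from s, on which g holds at every state, leading to a cycle on which g holds at every state. Equivalently, EG g holds at s iff s can reach, within the subgraph restricted to g-states, a nontrivial strongly connected component of that subgraph. -/
theorem stmt5 {S : Type} [Fintype S] (R : S → S → Prop) (htot : ∀ s, ∃ t, R s t)
    (g : S → Prop) (s : S) :
    -- the subgraph of `R` restricted to states satisfying `g`
    let Rg : S → S → Prop := fun a b => R a b ∧ g a ∧ g b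
    -- EG g at s iff a g-path from s leads to a g-cycle
    ((∃ p : ℕ → S, p 0 = s ∧ (∀ i, R (p i) (p (i + 1))) ∧ ∀ i, g (p i)) ↔
      (g s ∧ ∃ t, Relation.ReflTransGen Rg s t ∧
        ∃ u, Rg t u ∧ Relation.ReflTransGen Rg u t)) ∧
    -- equivalently, s reaches a nontrivial strongly connected component of Rg
    ((∃ p : ℕ → S, p 0 = s ∧ (∀ i, R (p i) (p (i + 1))) ∧ ∀ i, g (p i)) ↔
      (g s ∧ ∃ C : Set S,
        (∀ a ∈ C, ∀ b ∈ C, Relation.ReflTransGen Rg a b) ∧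
        (∃ a ∈ C, ∃ b ∈ C, Rg a b) ∧
        ∃ t ∈ C, Relation.ReflTransGen Rg s t)) := by
  intro Rg
  have h1 : (∃ p : ℕ → S, p 0 = s ∧ (∀ i, R (p i) (p (i + 1))) ∧ ∀ i, g (p i)) ↔
      (g s ∧ ∃ t, Relation.ReflTransGen Rg s t ∧
        ∃ u, Rg t u ∧ Relation.ReflTransGen Rg u t) := by
    constructor
    · rintro ⟨p, hp0, hR, hg⟩
      have hRg : ∀ i, Rg (p i) (p (i + 1)) := fun i => ⟨hR i, hg i, hg (i + 1)⟩
      have hreach : ∀ i j, i ≤ j → Relation.ReflTransGen Rg (p i) (p j) := by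
        intro i j hij
        induction j, hij using Nat.le_induction with
        | base => exact Relation.ReflTransGen.refl
        | succ n hn ih => exact ih.tail (hRg n)
      obtain ⟨i, j, hne, heq⟩ := Finite.exists_ne_map_eq_of_infinite p
      have hgs : g s := hp0 ▸ hg 0
      rcases hne.lt_or_gt with hij | hij
      · exact ⟨hgs, p i, hp0 ▸ hreach 0 i (Nat.zero_le _), p (i + 1), hRg i,
          heq ▸ hreach (i + 1) j hij⟩
      · exact ⟨hgs, p j, hp0 ▸ hreach 0 j (Nat.zero_le _), p (j + 1), hRg j,
          heq ▸ hreach (j + 1) i hij⟩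
    · rintro ⟨hgs, t, hst, u, htu, hut⟩
      have hsucc : ∀ x : {x // Relation.ReflTransGen Rg x t},
          ∃ y : {x // Relation.ReflTransGen Rg x t}, Rg x.1 y.1 := by
        rintro ⟨x, hx⟩
        rcases hx.cases_head with rfl | ⟨y, hxy, hyt⟩
        · exact ⟨⟨u, hut⟩, htu⟩
        · exact ⟨⟨y, hyt⟩, hxy⟩
      choose f hf using hsucc
      let p' : ℕ → {x // Relation.ReflTransGen Rg x t} :=
        fun n => Nat.rec ⟨s, hst⟩ (fun _ q => f q) n
      refine ⟨fun n => (p' n).1, rfl, fun i => (hf (p' i)).1, fun i => ?_⟩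
      cases i with
      | zero => exact hgs
      | succ n => exact (hf (p' n)).2.2
  refine ⟨h1, h1.trans ⟨?_, ?_⟩⟩
  · rintro ⟨hgs, t, hst, u, htu, hut⟩
    refine ⟨hgs, {x | Relation.ReflTransGen Rg t x ∧ Relation.ReflTransGen Rg x t},
      fun a ha b hb => ha.2.trans hb.1, ⟨t, ⟨.refl, .refl⟩, u, ⟨.single htu, hut⟩, htu⟩,
      t, ⟨.refl, .refl⟩, hst⟩
  · rintro ⟨hgs, C, hmut, ⟨a, ha, b, hb, hab⟩, t, htC, hst⟩
    exact ⟨hgs, a, hst.trans (hmut t htC a ha), b, hab, hmut b hb a ha⟩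
end

section
/- Let M be a finite Kripke structure with n states and X a deterministic Mealy machine with at most m states. If in the product system there is a path from product state (s0, q0) to some state whose M-component satisfies g2, with g1 holding at every intermediate M-component, then there is such a path containing at most m·n communication transitions. -/
/-- One step of the synchronous product of a host system (environment
transitions `env`, communication transitions `comm`) with a deterministic
Mealy machine `(δ, lam)`; the optional label records the communication. -/
inductive PStep {S Q I O : Type} (env : S → S → Prop) (comm : S → I → O → S → Prop)
    (δ : Q → I → Q) (lam : Q → I → O) :
    S × Q → Option (I × O) → S × Q → Prop
  | env {s s' : S} {q : Q} : env s s' → PStep env comm δ lam (s, q) none (s', q)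
  | comm {s s' : S} {q : Q} {a : I} {b : O} :
      comm s a b s' → lam q a = b →
      PStep env comm δ lam (s, q) (some (a, b)) (s', δ q a)

open Classical in
theorem stmt7 {S Q I O : Type} [Fintype S] [Fintype Q]
    (m n : ℕ) (hS : Fintype.card S = n) (hQ : Fintype.card Q ≤ m)
    (env : S → S → Prop) (comm : S → I → O → S → Prop)
    (δ : Q → I → Q) (lam : Q → I → O)
    (g1 g2 : S → Prop) (s0 : S) (q0 : Q)
    (hwit : ∃ (k : ℕ) (p : ℕ → S × Q) (l : ℕ → Option (I × O)),
      p 0 = (s0, q0) ∧ (∀ i < k, PStep env comm δ lam (p i) (l i) (p (i + 1))) ∧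
      g2 (p k).1 ∧ (∀ i < k, g1 (p i).1)) :
    ∃ (k : ℕ) (p : ℕ → S × Q) (l : ℕ → Option (I × O)),
      p 0 = (s0, q0) ∧ (∀ i < k, PStep env comm δ lam (p i) (l i) (p (i + 1))) ∧
      g2 (p k).1 ∧ (∀ i < k, g1 (p i).1) ∧
      ((Finset.range k).filter (fun i => (l i).isSome)).card ≤ m * n := by
  classical
  have hP : ∃ k : ℕ, ∃ (p : ℕ → S × Q) (l : ℕ → Option (I × O)),
      p 0 = (s0, q0) ∧ (∀ i < k, PStep env comm δ lam (p i) (l i) (p (i + 1))) ∧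
      g2 (p k).1 ∧ (∀ i < k, g1 (p i).1) := hwit
  set k := Nat.find hP with hkdef
  obtain ⟨p, l, h0, hstep, hg2, hg1⟩ := Nat.find_spec hP
  refine ⟨k, p, l, h0, hstep, hg2, hg1, ?_⟩
  -- In a minimal witness, all visited product states are distinct.
  have key : ∀ i j, i < j → j ≤ k → p i ≠ p j := by
    intro i j hij hjk hpe
    set d := j - i with hd
    have hlt : k - d < k := by omega
    apply Nat.find_min hP hlt
    refine ⟨fun t => if t ≤ i then p t else p (t + d),
            fun t => if t < i then l t else l (t + d), ?_, ?_, ?_, ?_⟩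
    · simp [h0]
    · intro t ht
      rcases lt_trichotomy t i with h | h | h
      · have h1 : t ≤ i := le_of_lt h
        have h2 : t + 1 ≤ i := h
        simp only [if_pos h1, if_pos h2, if_pos h]
        exact hstep t (by omega)
      · subst h
        have h1 : t ≤ t := le_refl t
        have h2 : ¬ (t + 1 ≤ t) := by omega
        have h3 : ¬ (t < t) := lt_irrefl t
        simp only [if_pos h1, if_neg h2, if_neg h3]
        have hte : t + d = j := by omega
        rw [hpe, hte]
        have : t + 1 + d = j + 1 := by omega
        rw [this]
        exact hstep j (by omega)
      · have h1 : ¬ (t ≤ i) := by omega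
        have h2 : ¬ (t + 1 ≤ i) := by omega
        have h3 : ¬ (t < i) := by omega
        simp only [if_neg h1, if_neg h2, if_neg h3]
        have : t + 1 + d = t + d + 1 := by omega
        rw [this]
        exact hstep (t + d) (by omega)
    · by_cases h : k - d ≤ i
      · have hji : j = k := by omega
        have hki : k - d = i := by omega
        show g2 (if k - d ≤ i then p (k - d) else p (k - d + d)).1
        rw [if_pos h, hki, hpe, hji]
        exact hg2
      · simp only [if_neg h]
        have : k - d + d = k := by omega
        rw [this]; exact hg2
    · intro t ht
      by_cases h : t ≤ i
      · simp only [if_pos h]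
        exact hg1 t (by omega)
      · simp only [if_neg h]
        exact hg1 (t + d) (by omega)
  -- Hence `k + 1 ≤ card (S × Q)`.
  have hinj : Function.Injective (fun t : Fin (k + 1) => p t.val) := by
    intro a b hab
    by_contra hne
    rcases lt_or_gt_of_ne hne with h | h
    · exact key a b h (by omega) hab
    · exact key b a h (by omega) hab.symm
  have hcard : k + 1 ≤ Fintype.card (S × Q) := by
    simpa using Fintype.card_le_of_injective _ hinj
  have hbound : k + 1 ≤ m * n := by
    have : Fintype.card (S × Q) = Fintype.card S * Fintype.card Q :=
      Fintype.card_prod S Q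
    rw [this, hS] at hcard
    calc k + 1 ≤ n * Fintype.card Q := hcard
      _ ≤ n * m := Nat.mul_le_mul_left n hQ
      _ = m * n := Nat.mul_comm n m
  calc ((Finset.range k).filter (fun i => (l i).isSome)).card
      ≤ (Finset.range k).card := Finset.card_filter_le _ _
    _ = k := Finset.card_range k
    _ ≤ m * n := by omega
end

section
/- Let M be a finite system with n states and X a deterministic Mealy machine with at most m states. The product system has an infinite execution from (s0, q0) that visits M-state s_f infinitely often if and only if there is a finite execution from (s0, q0) that reaches s_f, and then returns to s_f at least m more times, where each segment between consecutive visits to s_f contains at most m·n transitions. -/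
/-- A finite path of length `ℓ` for the step relation. -/
def IsPathAux {A : Type} (Step : A → A → Prop) (p : ℕ → A) (ℓ : ℕ) : Prop :=
  ∀ i < ℓ, Step (p i) (p (i+1))

/-- Shortening lemma: any finite path can be shortened to length at most the
cardinality of the state space, preserving endpoints and positivity of length. -/
lemma shortenAux {A : Type} [Fintype A] (Step : A → A → Prop)
    (C : ℕ) (hC : Fintype.card A ≤ C) :
    ∀ (ℓ : ℕ) (p : ℕ → A), IsPathAux Step p ℓ →
      ∃ (ℓ' : ℕ) (q : ℕ → A), ℓ' ≤ C ∧ (1 ≤ ℓ → 1 ≤ ℓ') ∧ q 0 = p 0 ∧ q ℓ' = p ℓ ∧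
        IsPathAux Step q ℓ' := by
  intro ℓ
  induction ℓ using Nat.strong_induction_on with
  | _ ℓ ih =>
    intro p hp
    by_cases hle : ℓ ≤ C
    · exact ⟨ℓ, p, hle, fun h => h, rfl, rfl, hp⟩
    · push_neg at hle
      have hcard : Fintype.card A < ℓ := lt_of_le_of_lt hC hle
      have hni : ¬ Function.Injective (fun i : Fin ℓ => p ((i : ℕ) + 1)) := by
        intro hinj
        have := Fintype.card_le_of_injective _ hinj
        simp only [Fintype.card_fin] at this
        omega
      obtain ⟨a, b, hfab, hab⟩ := Function.not_injective_iff.mp hni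
      -- WLOG a < b
      wlog hlt : (a : ℕ) < (b : ℕ) generalizing a b
      · exact this b a hfab.symm hab.symm (by
          rcases Fin.lt_or_lt_of_ne hab with h | h
          · exact absurd h hlt
          · exact h)
      set a1 : ℕ := (a : ℕ) + 1 with ha1
      set b1 : ℕ := (b : ℕ) + 1 with hb1
      have hpa : p a1 = p b1 := hfab
      have hb1ℓ : b1 ≤ ℓ := b.2
      have ha1b1 : a1 < b1 := by omega
      set d : ℕ := b1 - a1 with hd
      have hd1 : 1 ≤ d := by omega
      set ℓ' : ℕ := ℓ - d with hℓ'
      have hℓ'a : a1 ≤ ℓ' := by omega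
      have hℓ'd : ℓ' + d = ℓ := by omega
      set q : ℕ → A := fun t => if t ≤ a1 then p t else p (t + d) with hq
      have hq0 : q 0 = p 0 := by simp [hq]
      have hqend : q ℓ' = p ℓ := by
        by_cases h : ℓ' ≤ a1
        · have hea : ℓ' = a1 := le_antisymm h hℓ'a
          have hbe : b1 = ℓ := by omega
          show (if ℓ' ≤ a1 then p ℓ' else p (ℓ' + d)) = p ℓ
          rw [if_pos h, hea, hpa, hbe]
        · simp only [hq, if_neg h, hℓ'd]
      have hqpath : IsPathAux Step q ℓ' := by
        intro i hi
        rcases lt_trichotomy i a1 with h1 | h1 | h1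
        · have hi1 : i + 1 ≤ a1 := h1
          have : i < ℓ := by omega
          simpa [hq, Nat.le_of_lt h1, hi1] using hp i this
        · -- i = a1
          have hb1lt : b1 < ℓ := by omega
          have h2 : ¬ (i + 1 ≤ a1) := by omega
          have : q i = p b1 := by simp [hq, h1, hpa]
          have h3 : q (i + 1) = p (b1 + 1) := by
            have : i + 1 + d = b1 + 1 := by omega
            simp [hq, h2, this]
          rw [this, h3]
          exact hp b1 hb1lt
        · have h2 : ¬ (i ≤ a1) := by omega
          have h3 : ¬ (i + 1 ≤ a1) := by omega
          have : i + d < ℓ := by omega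
          have hstep := hp (i + d) this
          simp only [hq, if_neg h2, if_neg h3]
          have he : i + 1 + d = i + d + 1 := by omega
          rw [he]
          exact hstep
      have hlt' : ℓ' < ℓ := by omega
      obtain ⟨ℓ'', q', h1, h2, h3, h4, h5⟩ := ih ℓ' hlt' q hqpath
      exact ⟨ℓ'', q', h1, fun _ => h2 (by omega), h3.trans hq0, h4.trans hqend, h5⟩

lemma monoOfSuccAux (v : ℕ → ℕ) :
    ∀ j, (∀ a < j, v a < v (a+1)) → ∀ a ≤ j, v a ≤ v j := by
  intro j
  induction j with
  | zero =>
    intro _ a ha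
    obtain rfl : a = 0 := Nat.le_zero.mp ha
    exact le_rfl
  | succ j ih =>
    intro h a ha
    rcases Nat.eq_or_lt_of_le ha with h1 | h1
    · subst h1
      exact le_rfl
    · have hj : a ≤ j := by omega
      have := ih (fun a ha => h a (by omega)) a hj
      have := h j (by omega)
      omega

theorem stmt8 {S Q : Type} [Fintype S] [Fintype Q]
    (m n : ℕ) (hS : Fintype.card S = n) (hQ : Fintype.card Q ≤ m)
    (Step : S × Q → S × Q → Prop) (x0 : S × Q) (sf : S) :
    -- some infinite execution from x0 visits sf infinitely often
    (∃ p : ℕ → S × Q, p 0 = x0 ∧ (∀ i, Step (p i) (p (i + 1))) ∧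
        {i : ℕ | (p i).1 = sf}.Infinite) ↔
    -- iff some finite execution reaches sf and returns to it m more times,
    -- each segment between consecutive visits having at most m·n transitions
    (∃ (k : ℕ) (p : ℕ → S × Q) (v : Fin (m + 1) → ℕ),
        p 0 = x0 ∧ (∀ i < k, Step (p i) (p (i + 1))) ∧
        StrictMono v ∧ v (Fin.last m) ≤ k ∧
        (∀ j, (p (v j)).1 = sf) ∧
        v 0 ≤ m * n ∧
        (∀ j : Fin m, v j.succ - v j.castSucc ≤ m * n)) := by
  have hCmn : Fintype.card (S × Q) ≤ m * n := by
    rw [Fintype.card_prod, hS]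
    calc n * Fintype.card Q ≤ n * m := Nat.mul_le_mul_left n hQ
      _ = m * n := Nat.mul_comm n m
  constructor
  · -- forward direction
    rintro ⟨p, hp0, hstep, hinf⟩
    -- pick strictly increasing visit times
    obtain ⟨t, htmem, htmono⟩ :
        ∃ t : ℕ → ℕ, (∀ j, t j ∈ {i : ℕ | (p i).1 = sf}) ∧ ∀ j, t j < t (j+1) := by
      have h := fun a => hinf.exists_gt a
      choose f hf hf' using h
      refine ⟨fun j => f^[j+1] 0, fun j => ?_, fun j => ?_⟩
      · show f^[j+1] 0 ∈ _
        rw [Function.iterate_succ_apply']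
        exact hf _
      · show f^[j+1] 0 < f^[j+1+1] 0
        rw [Function.iterate_succ_apply' f (j+1) 0]
        exact hf' _
    have key : ∀ j, j ≤ m → ∃ (k : ℕ) (q : ℕ → S × Q) (v : ℕ → ℕ),
        q 0 = x0 ∧ IsPathAux Step q k ∧ (∀ a < j, v a < v (a+1)) ∧ v j = k ∧
        (∀ a ≤ j, (q (v a)).1 = sf) ∧ v 0 ≤ m * n ∧
        (∀ a < j, v (a+1) - v a ≤ m * n) ∧ q k = p (t j) := by
      intro j
      induction j with
      | zero =>
        intro _
        have hpath : IsPathAux Step p (t 0) := fun i _ => hstep i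
        obtain ⟨ℓ0, q, hℓC, _, hq0, hqe, hqp⟩ :=
          shortenAux Step (Fintype.card (S × Q)) le_rfl (t 0) p hpath
        refine ⟨ℓ0, q, fun _ => ℓ0, hq0.trans hp0, hqp, by omega, rfl, ?_,
          hℓC.trans hCmn, by omega, hqe⟩
        intro a _
        rw [hqe]
        exact htmem 0
      | succ j ih =>
        intro hjm
        obtain ⟨k, q, v, hq0, hqp, hvmono, hvj, hvsf, hv0, hvseg, hqe⟩ := ih (by omega)
        -- segment path from p (t j) to p (t (j+1))
        have hseg : IsPathAux Step (fun i => p (t j + i)) (t (j+1) - t j) := by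
          intro i _
          show Step (p (t j + i)) (p (t j + (i + 1)))
          have e : t j + (i + 1) = t j + i + 1 := by omega
          rw [e]
          exact hstep (t j + i)
        obtain ⟨ℓ, r, hℓC, hℓ1, hr0, hre, hrp⟩ :=
          shortenAux Step (Fintype.card (S × Q)) le_rfl (t (j+1) - t j)
            (fun i => p (t j + i)) hseg
        have hℓpos : 1 ≤ ℓ := hℓ1 (by have := htmono j; omega)
        have hre' : r ℓ = p (t (j+1)) := by
          rw [hre]
          congr 1
          have := htmono j
          omega
        have hr0' : r 0 = q k := by rw [hr0, Nat.add_zero, hqe]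
        set q' : ℕ → S × Q := fun i => if i ≤ k then q i else r (i - k) with hq'
        set v' : ℕ → ℕ := fun a => if a ≤ j then v a else k + ℓ with hv'
        have hq'agree : ∀ i ≤ k, q' i = q i := fun i hi => by simp [hq', hi]
        have hq'path : IsPathAux Step q' (k + ℓ) := by
          intro i hi
          rcases lt_trichotomy i k with h1 | h1 | h1
          · have h2 : i + 1 ≤ k := h1
            simpa [hq', Nat.le_of_lt h1, h2] using hqp i h1
          · subst h1
            have h2 : ¬ (i + 1 ≤ i) := by omega
            have e1 : q' i = r 0 := by simp [hq', hr0']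
            have e2 : q' (i + 1) = r 1 := by simp [hq', h2]
            rw [e1, e2]
            exact hrp 0 hℓpos
          · have h2 : ¬ (i ≤ k) := by omega
            have h3 : ¬ (i + 1 ≤ k) := by omega
            have e : i + 1 - k = (i - k) + 1 := by omega
            simp only [hq', if_neg h2, if_neg h3, e]
            exact hrp (i - k) (by omega)
        have hvlek : ∀ a ≤ j, v a ≤ k := by
          intro a ha
          have := monoOfSuccAux v j hvmono a ha
          omega
        refine ⟨k + ℓ, q', v', ?_, hq'path, ?_, by simp [hv'], ?_, ?_, ?_, ?_⟩
        · rw [hq'agree 0 (by omega)]; exact hq0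
        · intro a ha
          rcases Nat.lt_or_ge a j with h1 | h1
          · have h2 : a + 1 ≤ j := h1
            simpa [hv', Nat.le_of_lt h1, h2] using hvmono a h1
          · have haj : a = j := by omega
            subst haj
            have h2 : ¬ (a + 1 ≤ a) := by omega
            simp only [hv', if_pos (le_refl a), if_neg h2, hvj]
            omega
        · intro a ha
          rcases Nat.lt_or_ge j a with h1 | h1
          · have haj : a = j + 1 := by omega
            have h2 : ¬ (a ≤ j) := by omega
            simp only [hv', if_neg h2, hq']
            have h3 : ¬ (k + ℓ ≤ k) := by omega
            rw [if_neg h3]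
            have : k + ℓ - k = ℓ := by omega
            rw [this, hre']
            exact htmem (j+1)
          · have e1 : v' a = v a := by simp [hv', h1]
            rw [e1, hq'agree (v a) ((hvlek a h1))]
            exact hvsf a h1
        · simp only [hv', if_pos (Nat.zero_le j)]
          exact hv0
        · intro a ha
          rcases Nat.lt_or_ge a j with h1 | h1
          · have h2 : a + 1 ≤ j := h1
            simp only [hv', if_pos (Nat.le_of_lt h1), if_pos h2]
            exact hvseg a h1
          · have haj : a = j := by omega
            subst haj
            have h2 : ¬ (a + 1 ≤ a) := by omega
            simp only [hv', if_pos (le_refl a), if_neg h2, hvj]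
            have := hℓC.trans hCmn
            omega
        · have h2 : ¬ (k + ℓ ≤ k) := by omega
          simp only [hq', if_neg h2]
          have : k + ℓ - k = ℓ := by omega
          rw [this, hre']
    obtain ⟨k, q, v, hq0, hqp, hvmono, hvm, hvsf, hv0, hvseg, _⟩ := key m le_rfl
    refine ⟨k, q, fun a => v (a : ℕ), hq0, hqp, ?_, ?_, ?_, ?_, ?_⟩
    · rw [Fin.strictMono_iff_lt_succ]
      intro i
      simpa using hvmono (i : ℕ) i.2
    · simpa [Fin.val_last] using le_of_eq hvm
    · intro j
      exact hvsf (j : ℕ) (Nat.lt_succ_iff.mp j.2)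
    · simpa using hv0
    · intro j
      simpa using hvseg (j : ℕ) j.2
  · -- backward direction
    rintro ⟨k, p, v, hp0, hstep, hvmono, hvk, hvsf, _, _⟩
    -- pigeonhole: two visits share the same Q-component
    have hni : ¬ Function.Injective (fun j : Fin (m+1) => (p (v j)).2) := by
      intro hinj
      have := Fintype.card_le_of_injective _ hinj
      simp only [Fintype.card_fin] at this
      omega
    obtain ⟨a, b, hfab, hab⟩ := Function.not_injective_iff.mp hni
    wlog hlt : a < b generalizing a b
    · exact this b a hfab.symm hab.symm (by
        rcases Fin.lt_or_lt_of_ne hab with h | h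
        · exact absurd h hlt
        · exact h)
    have hpeq : p (v a) = p (v b) := by
      apply Prod.ext
      · rw [hvsf a, hvsf b]
      · exact hfab
    set i0 : ℕ := v a with hi0
    set i1 : ℕ := v b with hi1
    have hi01 : i0 < i1 := hvmono hlt
    have hi1k : i1 ≤ k := le_trans (hvmono.monotone (Fin.le_last b)) hvk
    set L : ℕ := i1 - i0 with hL
    have hLpos : 0 < L := by omega
    set q : ℕ → S × Q := fun t => if t ≤ i0 then p t else p (i0 + (t - i0) % L) with hq
    have hcyc : p (i0 + L) = p i0 := by
      have : i0 + L = i1 := by omega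
      rw [this, ← hpeq]
    refine ⟨q, by simp [hq, hp0], ?_, ?_⟩
    · intro i
      rcases lt_trichotomy i i0 with h1 | h1 | h1
      · have h2 : i + 1 ≤ i0 := h1
        simpa [hq, Nat.le_of_lt h1, h2] using hstep i (by omega)
      · have h2 : ¬ (i + 1 ≤ i0) := by omega
        have e0 : q i = p i0 := by simp [hq, h1.le, h1]
        by_cases hL1 : L = 1
        · have e : (i + 1 - i0) % L = 0 := by
            have h3 : i + 1 - i0 = 1 := by omega
            rw [h3, hL1]
          have e1 : q (i + 1) = p i0 := by simp [hq, h2, e]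
          rw [e0, e1]
          have hst := hstep i0 (by omega)
          have e2 : i0 + 1 = i0 + L := by omega
          rw [e2, hcyc] at hst
          exact hst
        · have e : (i + 1 - i0) % L = 1 := by
            have h3 : i + 1 - i0 = 1 := by omega
            rw [h3, Nat.mod_eq_of_lt (by omega)]
          have e1 : q (i + 1) = p (i0 + 1) := by simp [hq, h2, e]
          rw [e0, e1]
          exact hstep i0 (by omega)
      · have h2 : ¬ (i ≤ i0) := by omega
        have h3 : ¬ (i + 1 ≤ i0) := by omega
        set s : ℕ := i - i0 with hs
        set r : ℕ := s % L with hr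
        have hrL : r < L := Nat.mod_lt _ hLpos
        have hdm : s = L * (s / L) + r := (Nat.div_add_mod s L).symm
        have e1 : i + 1 - i0 = s + 1 := by omega
        have e2 : (s + 1) % L = (r + 1) % L := by
          conv_lhs => rw [show s + 1 = L * (s / L) + (r + 1) by omega]
          exact Nat.mul_add_mod _ _ _
        simp only [hq, if_neg h2, if_neg h3, e1, e2]
        by_cases hrl : r + 1 = L
        · have e3 : (r + 1) % L = 0 := by rw [hrl, Nat.mod_self]
          rw [e3, Nat.add_zero]
          have := hstep (i0 + r) (by omega)
          have e4 : i0 + r + 1 = i0 + L := by omega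
          rw [e4, hcyc] at this
          exact this
        · have e3 : (r + 1) % L = r + 1 := Nat.mod_eq_of_lt (by omega)
          rw [e3]
          have := hstep (i0 + r) (by omega)
          have e4 : i0 + r + 1 = i0 + (r + 1) := by omega
          rw [e4] at this
          exact this
    · apply Set.infinite_of_injective_forall_mem
        (f := fun t : ℕ => i0 + t * L)
      · intro x y hxy
        have hxy' : x * L = y * L := Nat.add_left_cancel hxy
        exact Nat.eq_of_mul_eq_mul_right hLpos hxy'
      · intro t
        show (q (i0 + t * L)).1 = sf
        rcases Nat.eq_zero_or_pos t with ht | ht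
        · subst ht
          simp only [hq, Nat.zero_mul, Nat.add_zero, if_pos (le_refl i0)]
          have := hvsf a
          rw [← hi0] at this
          exact this
        · have h2 : ¬ (i0 + t * L ≤ i0) := by
            have : 0 < t * L := Nat.mul_pos ht hLpos
            omega
          have e : (i0 + t * L - i0) % L = 0 := by
            have : i0 + t * L - i0 = t * L := by omega
            rw [this, Nat.mul_mod_left]
          simp only [hq, if_neg h2, e, Nat.add_zero]
          have := hvsf a
          rw [← hi0] at this
          exact this
end

section
/- Let K be a finite Kripke structure and let K' be the subgraph of K induced by the states reachable from s0 and co-reachable to s_f (i.e., states s with s0 →* s and s →* s_f), together with states on cycles through s_f. Then s_f is visitable infinitely often from s0 in K if and only if it is visitable infinitely often from s0 within K'. -/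
theorem stmt12 {S : Type} [Fintype S] (R : S → S → Prop) (s0 sf : S) :
    -- K' : subgraph induced by states reachable from s0 and co-reachable to sf,
    -- together with states on cycles through sf
    let A : Set S := {s | Relation.ReflTransGen R s0 s ∧ Relation.ReflTransGen R s sf}
      ∪ {s | Relation.ReflTransGen R sf s ∧ Relation.ReflTransGen R s sf}
    let R' : S → S → Prop := fun a b => R a b ∧ a ∈ A ∧ b ∈ A
    -- sf visitable infinitely often from s0 in K iff in K'
    ((∃ p : ℕ → S, p 0 = s0 ∧ (∀ i, R (p i) (p (i + 1))) ∧
        {i : ℕ | p i = sf}.Infinite) ↔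
     (∃ p : ℕ → S, p 0 = s0 ∧ (∀ i, R' (p i) (p (i + 1))) ∧
        {i : ℕ | p i = sf}.Infinite)) := by
  intro A R'
  constructor
  · rintro ⟨p, h0, hstep, hinf⟩
    -- segments of the path are ReflTransGen
    have hseg : ∀ i j, i ≤ j → Relation.ReflTransGen R (p i) (p j) := by
      intro i j hij
      induction j with
      | zero =>
        simp only [Nat.le_zero] at hij; subst hij; exact Relation.ReflTransGen.refl
      | succ j ih =>
        rcases Nat.lt_or_ge i (j+1) with h | h
        · exact (ih (Nat.lt_succ_iff.mp h)).tail (hstep j)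
        · have : i = j + 1 := le_antisymm hij h
          subst this; exact Relation.ReflTransGen.refl
    have hA : ∀ i, p i ∈ A := by
      intro i
      obtain ⟨j, hj, hij⟩ := hinf.exists_gt i
      left
      exact ⟨h0 ▸ hseg 0 i (Nat.zero_le i), hj ▸ hseg i j hij.le⟩
    exact ⟨p, h0, fun i => ⟨hstep i, hA i, hA (i+1)⟩, hinf⟩
  · rintro ⟨p, h0, hstep, hinf⟩
    exact ⟨p, h0, fun i => (hstep i).1, hinf⟩
end
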